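/- Suppose a randomized forecaster h̄ is (ε, δ)-mPAIC, i.e., P(|h̄(X, R)(Y) - R| ≥ ε) ≤ δ where R is uniform on [0,1] independent of (X,Y). Then for any ε' > ε, h̄ is (ε', δ(1-ε)/(ε'-ε))-PAIC, where (ε', δ')-PAIC means P_X[d_{W1}(F_{h̄[X,R](Y)}, F_U) ≥ ε'] ≤ δ'. -/
import Mathlib


open MeasureTheory ProbabilityTheory Set

/-- Computation of `∫ s in 0..1, min b (1-s)`. -/
lemma aux_min_integral (b : ℝ) (hb : 0 ≤ b) :
    ∫ s in (0:ℝ)..1, min b (1 - s) = b * (1 - min b 1) + (min b 1) ^ 2 / 2 := by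
  have hcont : Continuous fun s : ℝ => min b (1 - s) :=
    continuous_const.min (continuous_const.sub continuous_id)
  set c := min b 1 with hc
  have hc0 : 0 ≤ c := le_min hb zero_le_one
  have hc1 : c ≤ 1 := min_le_right _ _
  have hcb : c ≤ b := min_le_left _ _
  have hsplit : (∫ s in (0:ℝ)..(1 - c), min b (1 - s)) + ∫ s in (1 - c:ℝ)..1, min b (1 - s)
      = ∫ s in (0:ℝ)..1, min b (1 - s) :=
    intervalIntegral.integral_add_adjacent_intervals
      (hcont.intervalIntegrable _ _) (hcont.intervalIntegrable _ _)
  have hpiece1 : (∫ s in (0:ℝ)..(1 - c), min b (1 - s)) = b * (1 - c) := by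
    rcases le_total b 1 with hb1 | hb1
    · have hcb' : c = b := min_eq_left hb1
      have : EqOn (fun s : ℝ => min b (1 - s)) (fun _ => b) (uIcc 0 (1 - c)) := by
        intro s hs
        rw [uIcc_of_le (by linarith)] at hs
        have h1 : s ≤ 1 - c := hs.2
        simp only
        rw [hcb'] at h1
        rw [min_eq_left (by linarith)]
      rw [intervalIntegral.integral_congr this, intervalIntegral.integral_const]
      simp [mul_comm]
    · have hcb' : c = 1 := min_eq_right hb1
      rw [hcb']
      norm_num
  have hpiece2 : (∫ s in (1 - c:ℝ)..1, min b (1 - s)) = c ^ 2 / 2 := by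
    have heq : EqOn (fun s : ℝ => min b (1 - s)) (fun s => 1 - s) (uIcc (1 - c) 1) := by
      intro s hs
      rw [uIcc_of_le (by linarith)] at hs
      have h1 : 1 - c ≤ s := hs.1
      simp only
      rw [min_eq_right (by linarith)]
    rw [intervalIntegral.integral_congr heq]
    have h1 : (∫ s in (1 - c:ℝ)..1, (1 - s))
        = (∫ _s in (1 - c:ℝ)..1, (1:ℝ)) - ∫ s in (1 - c:ℝ)..1, s :=
      intervalIntegral.integral_sub (intervalIntegrable_const)
        ((continuous_id.intervalIntegrable _ _))
    rw [h1, intervalIntegral.integral_const, integral_id]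
    simp only [smul_eq_mul]
    ring
  rw [← hsplit, hpiece1, hpiece2]

/-- Key analytic bound: a monotone function `G` with values in `[0,1]` that stays within
`±b` of the identity on `(0,1]` satisfies `∫ t in 0..1, |G t - t| ≤ ∫ s in 0..1, min b (1-s)`. -/
lemma aux_key (G : ℝ → ℝ) (hmono : Monotone G) (hG0 : ∀ t, 0 ≤ G t) (hG1 : ∀ t, G t ≤ 1)
    (b : ℝ) (hb : 0 ≤ b)
    (hup : ∀ t ∈ Ioc (0:ℝ) 1, G t ≤ t + b) (hlo : ∀ t ∈ Ioc (0:ℝ) 1, t - b ≤ G t) :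
    ∫ t in (0:ℝ)..1, |G t - t| ≤ b * (1 - min b 1) + (min b 1) ^ 2 / 2 := by
  have hGmeas : Measurable G := hmono.measurable
  have hfmeas : Measurable fun t => |G t - t| := (hGmeas.sub measurable_id).abs
  -- integrability of |G - id| on (0,1]
  have hint : IntegrableOn (fun t => |G t - t|) (Ioc (0:ℝ) 1) volume := by
    refine Integrable.mono' (integrable_const (2:ℝ)) hfmeas.aestronglyMeasurable ?_
    refine (ae_restrict_iff' measurableSet_Ioc).2 (Filter.Eventually.of_forall fun t ht => ?_)
    rw [Real.norm_eq_abs, abs_abs]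
    exact abs_le.mpr ⟨by linarith [hG0 t, ht.2], by linarith [hG1 t, ht.1]⟩
  -- pass to lintegrals
  have hW : (∫ t in (0:ℝ)..1, |G t - t|) = ∫ t in Ioc (0:ℝ) 1, |G t - t| :=
    intervalIntegral.integral_of_le zero_le_one
  have hofW : ENNReal.ofReal (∫ t in Ioc (0:ℝ) 1, |G t - t|)
      = ∫⁻ t in Ioc (0:ℝ) 1, ENNReal.ofReal |G t - t| :=
    ofReal_integral_eq_lintegral_ofReal hint
      (Filter.Eventually.of_forall fun t => abs_nonneg _)
  -- split |G t - t| into positive and negative parts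
  have habs : ∀ t : ℝ, ENNReal.ofReal |G t - t|
      = ENNReal.ofReal (max (G t - t) 0) + ENNReal.ofReal (max (t - G t) 0) := by
    intro t
    rw [← ENNReal.ofReal_add (le_max_right _ _) (le_max_right _ _)]
    congr 1
    rcases le_total (G t) t with h | h
    · rw [abs_of_nonpos (by linarith), max_eq_right (by linarith), max_eq_left (by linarith)]
      ring
    · rw [abs_of_nonneg (by linarith), max_eq_left (by linarith), max_eq_right (by linarith)]
      ring
  have hUmeas : Measurable fun t => ENNReal.ofReal (max (G t - t) 0) :=
    ((hGmeas.sub measurable_id).max measurable_const).ennreal_ofReal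
  have hsplit2 : (∫⁻ t in Ioc (0:ℝ) 1, ENNReal.ofReal |G t - t|)
      = (∫⁻ t in Ioc (0:ℝ) 1, ENNReal.ofReal (max (G t - t) 0))
        + ∫⁻ t in Ioc (0:ℝ) 1, ENNReal.ofReal (max (t - G t) 0) := by
    rw [← lintegral_add_left hUmeas]
    exact lintegral_congr fun t => habs t
  -- rewrite negative part as a measure of intervals
  have hVIoo : ∀ t : ℝ, ENNReal.ofReal (max (t - G t) 0) = volume (Ioo (G t) t) := by
    intro t
    rw [Real.volume_Ioo]
    rcases le_total (t - G t) 0 with h | h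
    · rw [max_eq_right h, ENNReal.ofReal_zero, ENNReal.ofReal_of_nonpos h]
    · rw [max_eq_left h]
  -- Fubini for the negative part
  set m : Measure ℝ := volume.restrict (Ioc (0:ℝ) 1) with hm
  set P : Set (ℝ × ℝ) := {p : ℝ × ℝ | G p.1 < p.2 ∧ p.2 < p.1} with hP
  have hPmeas : MeasurableSet P :=
    ((measurableSet_lt (hGmeas.comp measurable_fst) measurable_snd).inter
      (measurableSet_lt measurable_snd measurable_fst))
  have hAmeas : ∀ s : ℝ, MeasurableSet {t : ℝ | G t < s ∧ s < t} := fun s =>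
    ((measurableSet_lt hGmeas measurable_const).inter
      (measurableSet_lt measurable_const measurable_id))
  have hV1 : (∫⁻ t in Ioc (0:ℝ) 1, ENNReal.ofReal (max (t - G t) 0)) = (m.prod volume) P := by
    rw [Measure.prod_apply hPmeas]
    refine lintegral_congr fun t => ?_
    rw [hVIoo t]
    congr 1
  have hV2 : (m.prod volume) P = ∫⁻ s, m {t : ℝ | G t < s ∧ s < t} ∂volume := by
    rw [Measure.prod_apply_symm hPmeas]
    rfl
  have hV3 : (∫⁻ s, m {t : ℝ | G t < s ∧ s < t} ∂volume)
      = ∫⁻ s in Ioc (0:ℝ) 1, m {t : ℝ | G t < s ∧ s < t} ∂volume := by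
    rw [← lintegral_indicator measurableSet_Ioc]
    refine lintegral_congr fun s => ?_
    rcases em (s ∈ Ioc (0:ℝ) 1) with hs | hs
    · rw [indicator_of_mem hs]
    · rw [indicator_of_notMem hs]
      have : {t : ℝ | G t < s ∧ s < t} ∩ Ioc (0:ℝ) 1 = ∅ := by
        ext t
        simp only [mem_inter_iff, mem_setOf_eq, mem_Ioc, mem_empty_iff_false, iff_false]
        rintro ⟨⟨h1, h2⟩, h3, h4⟩
        exact hs (mem_Ioc.2 ⟨lt_of_le_of_lt (hG0 t) h1, le_trans h2.le h4⟩)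
      rw [hm, Measure.restrict_apply (hAmeas s), this, measure_empty]
  -- pointwise bound on (0,1]
  have hpoint : ∀ s ∈ Ioc (0:ℝ) 1,
      ENNReal.ofReal (max (G s - s) 0) + m {t : ℝ | G t < s ∧ s < t}
        ≤ ENNReal.ofReal (min b (1 - s)) := by
    intro s hs
    rw [hm, Measure.restrict_apply (hAmeas s)]
    have h1 : ENNReal.ofReal (max (G s - s) 0) = volume (Ioc s (G s)) := by
      rw [Real.volume_Ioc]
      rcases le_total (G s - s) 0 with h | h
      · rw [max_eq_right h, ENNReal.ofReal_zero, ENNReal.ofReal_of_nonpos h]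
      · rw [max_eq_left h]
    have hsub1 : Ioc s (G s) ⊆ Ioc s (min (s + b) 1) :=
      Ioc_subset_Ioc_right (le_min (hup s hs) (hG1 s))
    have hsub2 : {t : ℝ | G t < s ∧ s < t} ∩ Ioc (0:ℝ) 1 ⊆ Ioc s (min (s + b) 1) := by
      rintro t ⟨⟨hGt, hst⟩, ht01⟩
      exact ⟨hst, le_min (by linarith [hlo t ht01]) ht01.2⟩
    have hdisj : Disjoint (Ioc s (G s)) ({t : ℝ | G t < s ∧ s < t} ∩ Ioc (0:ℝ) 1) := by
      rw [Set.disjoint_left]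
      rintro t ⟨hst, htG⟩ ⟨⟨hGt, hst'⟩, _⟩
      have := hmono hst.le
      linarith
    calc ENNReal.ofReal (max (G s - s) 0) + volume ({t : ℝ | G t < s ∧ s < t} ∩ Ioc (0:ℝ) 1)
        = volume (Ioc s (G s) ∪ ({t : ℝ | G t < s ∧ s < t} ∩ Ioc (0:ℝ) 1)) := by
          rw [h1, measure_union hdisj ((hAmeas s).inter measurableSet_Ioc)]
      _ ≤ volume (Ioc s (min (s + b) 1)) := measure_mono (union_subset hsub1 hsub2)
      _ = ENNReal.ofReal (min b (1 - s)) := by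
          rw [Real.volume_Ioc]
          congr 1
          rcases le_total (s + b) 1 with h | h
          · rw [min_eq_left h, min_eq_left (by linarith)]
            ring
          · rw [min_eq_right h, min_eq_right (by linarith)]
    -- end calc
  -- integrability of the majorant
  have hmajcont : Continuous fun s : ℝ => min b (1 - s) :=
    continuous_const.min (continuous_const.sub continuous_id)
  have hmajint : IntegrableOn (fun s : ℝ => min b (1 - s)) (Ioc (0:ℝ) 1) volume := by
    refine Integrable.mono' (integrable_const b) hmajcont.aestronglyMeasurable ?_
    refine (ae_restrict_iff' measurableSet_Ioc).2 (Filter.Eventually.of_forall fun t ht => ?_)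
    rw [Real.norm_eq_abs, abs_of_nonneg (le_min hb (by linarith [ht.2]))]
    exact min_le_left _ _
  have hmajof : (∫⁻ s in Ioc (0:ℝ) 1, ENNReal.ofReal (min b (1 - s)))
      = ENNReal.ofReal (∫ s in Ioc (0:ℝ) 1, min b (1 - s)) := by
    rw [ofReal_integral_eq_lintegral_ofReal hmajint]
    refine (ae_restrict_iff' measurableSet_Ioc).2
      (Filter.Eventually.of_forall fun t ht => ?_)
    simp only [Pi.zero_apply]
    exact le_min hb (by linarith [ht.2])
  -- put it together
  have hchain : ENNReal.ofReal (∫ t in (0:ℝ)..1, |G t - t|)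
      ≤ ENNReal.ofReal (∫ s in (0:ℝ)..1, min b (1 - s)) := by
    rw [hW, hofW, hsplit2]
    calc (∫⁻ t in Ioc (0:ℝ) 1, ENNReal.ofReal (max (G t - t) 0))
          + ∫⁻ t in Ioc (0:ℝ) 1, ENNReal.ofReal (max (t - G t) 0)
        = (∫⁻ t in Ioc (0:ℝ) 1, ENNReal.ofReal (max (G t - t) 0))
          + ∫⁻ s in Ioc (0:ℝ) 1, m {t : ℝ | G t < s ∧ s < t} ∂volume := by
            rw [hV1, hV2, hV3]
      _ = ∫⁻ s in Ioc (0:ℝ) 1,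
            (ENNReal.ofReal (max (G s - s) 0) + m {t : ℝ | G t < s ∧ s < t}) ∂volume := by
            rw [lintegral_add_left hUmeas]
      _ ≤ ∫⁻ s in Ioc (0:ℝ) 1, ENNReal.ofReal (min b (1 - s)) ∂volume :=
            setLIntegral_mono hmajcont.measurable.ennreal_ofReal hpoint
      _ = ENNReal.ofReal (∫ s in Ioc (0:ℝ) 1, min b (1 - s)) := hmajof
      _ = ENNReal.ofReal (∫ s in (0:ℝ)..1, min b (1 - s)) := by
            rw [intervalIntegral.integral_of_le zero_le_one]
  have hJnn : (0:ℝ) ≤ ∫ s in (0:ℝ)..1, min b (1 - s) := by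
    refine intervalIntegral.integral_nonneg zero_le_one fun u hu => ?_
    exact le_min hb (by linarith [hu.2])
  have := (ENNReal.ofReal_le_ofReal_iff hJnn).1 hchain
  calc ∫ t in (0:ℝ)..1, |G t - t| ≤ ∫ s in (0:ℝ)..1, min b (1 - s) := this
    _ = b * (1 - min b 1) + (min b 1) ^ 2 / 2 := aux_min_integral b hb

/-- mPAIC implies PAIC. -/
theorem mpaic_implies_paic
    {𝒳 𝒴 : Type*} [MeasurableSpace 𝒳] [MeasurableSpace 𝒴]
    (μX : Measure 𝒳) [IsProbabilityMeasure μX]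
    (ν : ProbabilityTheory.Kernel 𝒳 𝒴) [ProbabilityTheory.IsMarkovKernel ν]
    (hbar : 𝒳 → ℝ → 𝒴 → ℝ)
    (ε δ ε' : ℝ) (hε : 0 ≤ ε) (hεε' : ε < ε') (hε'1 : ε' ≤ 1) (hδ : 0 ≤ δ)
    -- the uniform distribution on [0,1]
    (unif : Measure ℝ) (hunif : unif = volume.restrict (Set.Icc 0 1))
    -- mPAIC: over the joint law of (X, Y, R) with R uniform independent of (X,Y)
    (hmpaic :
      ((μX.compProd ν).prod unif)
        {p : (𝒳 × 𝒴) × ℝ | ε ≤ |hbar p.1.1 p.2 p.1.2 - p.2|}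
        ≤ ENNReal.ofReal δ) :
    μX {x : 𝒳 |
        ε' ≤ ∫ t in (0:ℝ)..1,
          |((((ν x).prod unif) {q : 𝒴 × ℝ | hbar x q.2 q.1 ≤ t}).toReal - t)|}
      ≤ ENNReal.ofReal (δ * (1 - ε) / (ε' - ε)) := by
  have hunifprob : IsProbabilityMeasure unif := by
    rw [hunif]
    constructor
    simp [Real.volume_Icc]
  have hε1 : ε < 1 := lt_of_lt_of_le hεε' hε'1
  -- the bad set and its measurable hull
  set Sj : Set ((𝒳 × 𝒴) × ℝ) := {p : (𝒳 × 𝒴) × ℝ | ε ≤ |hbar p.1.1 p.2 p.1.2 - p.2|} with hSj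
  set T : Set ((𝒳 × 𝒴) × ℝ) := toMeasurable ((μX.compProd ν).prod unif) Sj with hT
  have hTmeas : MeasurableSet T := measurableSet_toMeasurable _ _
  have hSjT : Sj ⊆ T := subset_toMeasurable _ _
  have hTμ : ((μX.compProd ν).prod unif) T = ((μX.compProd ν).prod unif) Sj :=
    measure_toMeasurable _
  set T' : Set (𝒳 × (𝒴 × ℝ)) := (MeasurableEquiv.prodAssoc.symm : 𝒳 × 𝒴 × ℝ ≃ᵐ (𝒳 × 𝒴) × ℝ) ⁻¹' T
    with hT'
  have hT'meas : MeasurableSet T' := MeasurableEquiv.prodAssoc.symm.measurable hTmeas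
  have hT'mem : ∀ (x : 𝒳) (y : 𝒴) (r : ℝ), (x, (y, r)) ∈ T' ↔ ((x, y), r) ∈ T := by
    intro x y r
    rfl
  -- the kernel x ↦ (ν x) × unif
  set κ : Kernel 𝒳 (𝒴 × ℝ) := ν ×ₖ Kernel.const 𝒳 unif with hκ
  have hκapp : ∀ x : 𝒳, κ x = (ν x).prod unif := by
    intro x
    rw [hκ, Kernel.prod_apply, Kernel.const_apply]
  set abar : 𝒳 → ENNReal := fun x => ((ν x).prod unif) (Prod.mk x ⁻¹' T') with habar
  have habar_meas : Measurable abar := by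
    have h := Kernel.measurable_kernel_prodMk_left (κ := κ) hT'meas
    simp only [hκapp] at h
    exact h
  have habar_le_one : ∀ x, abar x ≤ 1 := fun x => prob_le_one
  have habar_fin : ∀ x, abar x ≠ ⊤ := fun x =>
    ne_top_of_le_ne_top ENNReal.one_ne_top (habar_le_one x)
  -- ∫⁻ abar ≤ δ
  have hlint : ∫⁻ x, abar x ∂μX ≤ ENNReal.ofReal δ := by
    have h1 : ∫⁻ x, abar x ∂μX = (μX ⊗ₘ κ) T' := by
      rw [Measure.compProd_apply hT'meas]
      exact lintegral_congr fun x => by rw [hκapp]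
    have h2 : (μX ⊗ₘ κ) T' = ((μX.compProd ν).prod unif) T := by
      calc (μX ⊗ₘ κ) T' = ∫⁻ x, κ x (Prod.mk x ⁻¹' T') ∂μX := Measure.compProd_apply hT'meas
        _ = ∫⁻ x, ∫⁻ y, unif (Prod.mk (x, y) ⁻¹' T) ∂ν x ∂μX := by
            refine lintegral_congr fun x => ?_
            rw [hκapp, Measure.prod_apply (measurable_prodMk_left hT'meas)]
            rfl
        _ = ∫⁻ p, unif (Prod.mk p ⁻¹' T) ∂(μX.compProd ν) :=
            (Measure.lintegral_compProd (measurable_measure_prodMk_left hTmeas)).symm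
        _ = ((μX.compProd ν).prod unif) T := (Measure.prod_apply hTmeas).symm
    rw [h1, h2, hTμ]
    exact hmpaic
  -- Markov's inequality
  set θ : ℝ := (ε' - ε) / (1 - ε) with hθdef
  have hθpos : 0 < θ := div_pos (by linarith) (by linarith)
  have hmarkov : μX {x : 𝒳 | ENNReal.ofReal θ ≤ abar x}
      ≤ ENNReal.ofReal (δ * (1 - ε) / (ε' - ε)) := by
    have h3 : ENNReal.ofReal θ * μX {x : 𝒳 | ENNReal.ofReal θ ≤ abar x} ≤ ENNReal.ofReal δ :=
      le_trans (mul_meas_ge_le_lintegral₀ habar_meas.aemeasurable _) hlint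
    have hne : ENNReal.ofReal θ ≠ 0 := (ENNReal.ofReal_pos.2 hθpos).ne'
    have h4 : μX {x : 𝒳 | ENNReal.ofReal θ ≤ abar x} ≤ ENNReal.ofReal δ / ENNReal.ofReal θ :=
      (ENNReal.le_div_iff_mul_le (Or.inl hne) (Or.inl ENNReal.ofReal_ne_top)).2
        (by rwa [mul_comm] at h3)
    refine le_trans h4 (le_of_eq ?_)
    rw [← ENNReal.ofReal_div_of_pos hθpos]
    congr 1
    rw [hθdef]
    field_simp
  -- inclusion of superlevel sets
  refine le_trans (measure_mono ?_) hmarkov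
  intro x hx
  simp only [mem_setOf_eq] at hx ⊢
  by_contra hcon
  push_neg at hcon
  set a : ℝ := (abar x).toReal with ha
  have haθ : a < θ := ENNReal.toReal_lt_of_lt_ofReal hcon
  have ha0 : (0:ℝ) ≤ a := ENNReal.toReal_nonneg
  have ha1 : a ≤ 1 := by
    have := ENNReal.toReal_mono ENNReal.one_ne_top (habar_le_one x)
    simpa using this
  -- fixed x: the product measure and CDF
  set π : Measure (𝒴 × ℝ) := (ν x).prod unif with hπ
  have hπprob : IsProbabilityMeasure π := by rw [hπ]; infer_instance
  set G : ℝ → ℝ := fun t => (π {q : 𝒴 × ℝ | hbar x q.2 q.1 ≤ t}).toReal with hG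
  have hout : ∀ q : 𝒴 × ℝ, q ∉ Prod.mk x ⁻¹' T' → |hbar x q.2 q.1 - q.2| < ε := by
    intro q hq
    by_contra h
    push_neg at h
    exact hq (hSjT h)
  have hGmono : Monotone G := fun s t hst =>
    ENNReal.toReal_mono (measure_ne_top _ _) (measure_mono fun q hq => le_trans hq hst)
  have hG0 : ∀ t, 0 ≤ G t := fun t => ENNReal.toReal_nonneg
  have hG1 : ∀ t, G t ≤ 1 := by
    intro t
    have h := prob_le_one (μ := π) (s := {q : 𝒴 × ℝ | hbar x q.2 q.1 ≤ t})
    have := ENNReal.toReal_mono ENNReal.one_ne_top h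
    simpa using this
  set b : ℝ := ε + a with hb
  have hb0 : (0:ℝ) ≤ b := by positivity
  -- upper band
  have hup : ∀ t ∈ Ioc (0:ℝ) 1, G t ≤ t + b := by
    intro t ht
    have hsub : {q : 𝒴 × ℝ | hbar x q.2 q.1 ≤ t}
        ⊆ (Prod.mk x ⁻¹' T') ∪ {q : 𝒴 × ℝ | q.2 < t + ε} := by
      intro q hq
      by_cases hqT : q ∈ Prod.mk x ⁻¹' T'
      · exact Or.inl hqT
      · refine Or.inr ?_
        have h1 := (abs_lt.1 (hout q hqT)).1
        have h2 : hbar x q.2 q.1 ≤ t := hq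
        simp only [mem_setOf_eq]
        linarith
    have h5 : π {q : 𝒴 × ℝ | q.2 < t + ε} ≤ ENNReal.ofReal (t + ε) := by
      have heq : {q : 𝒴 × ℝ | q.2 < t + ε} = (univ : Set 𝒴) ×ˢ Iio (t + ε) := by
        ext q
        simp [mem_prod]
      rw [heq, hπ, Measure.prod_prod, measure_univ, one_mul, hunif,
        Measure.restrict_apply measurableSet_Iio]
      calc volume (Iio (t + ε) ∩ Icc 0 1)
          ≤ volume (Ico (0:ℝ) (t + ε)) :=
            measure_mono fun r hr => mem_Ico.2 ⟨hr.2.1, hr.1⟩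
        _ = ENNReal.ofReal (t + ε) := by rw [Real.volume_Ico, sub_zero]
    have h6 : π {q : 𝒴 × ℝ | hbar x q.2 q.1 ≤ t} ≤ abar x + ENNReal.ofReal (t + ε) := by
      refine le_trans (measure_mono hsub) (le_trans (measure_union_le _ _) ?_)
      exact add_le_add le_rfl h5
    have h7 := ENNReal.toReal_mono
      (ENNReal.add_ne_top.2 ⟨habar_fin x, ENNReal.ofReal_ne_top⟩) h6
    rw [ENNReal.toReal_add (habar_fin x) ENNReal.ofReal_ne_top,
      ENNReal.toReal_ofReal (by linarith [ht.1] : (0:ℝ) ≤ t + ε)] at h7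
    have : G t ≤ a + (t + ε) := h7
    rw [hb]
    linarith
  -- lower band
  have hlo : ∀ t ∈ Ioc (0:ℝ) 1, t - b ≤ G t := by
    intro t ht
    rcases le_or_gt (t - ε) 0 with hcase | hcase
    · refine le_trans ?_ (hG0 t)
      rw [hb]
      linarith
    · have hsub : ((univ : Set 𝒴) ×ˢ Iic (t - ε))
          ⊆ (Prod.mk x ⁻¹' T') ∪ {q : 𝒴 × ℝ | hbar x q.2 q.1 ≤ t} := by
        rintro q ⟨-, hr⟩
        by_cases hqT : q ∈ Prod.mk x ⁻¹' T'
        · exact Or.inl hqT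
        · refine Or.inr ?_
          have h1 := (abs_lt.1 (hout q hqT)).2
          have h2 : q.2 ≤ t - ε := hr
          simp only [mem_setOf_eq]
          linarith
      have h7 : ENNReal.ofReal (t - ε) ≤ π ((univ : Set 𝒴) ×ˢ Iic (t - ε)) := by
        rw [hπ, Measure.prod_prod, measure_univ, one_mul, hunif,
          Measure.restrict_apply measurableSet_Iic]
        calc ENNReal.ofReal (t - ε) = volume (Icc (0:ℝ) (t - ε)) := by
              rw [Real.volume_Icc, sub_zero]
          _ ≤ volume (Iic (t - ε) ∩ Icc 0 1) := by
              refine measure_mono fun r hrr => ?_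
              rcases hrr with ⟨hr0, hrc⟩
              exact ⟨hrc, hr0, le_trans hrc (by linarith [ht.2])⟩
      have h8 : ENNReal.ofReal (t - ε) ≤ abar x + π {q : 𝒴 × ℝ | hbar x q.2 q.1 ≤ t} :=
        le_trans h7 (le_trans (measure_mono hsub) (measure_union_le _ _))
      have h9 := ENNReal.toReal_mono
        (ENNReal.add_ne_top.2 ⟨habar_fin x, measure_ne_top _ _⟩) h8
      rw [ENNReal.toReal_ofReal hcase.le,
        ENNReal.toReal_add (habar_fin x) (measure_ne_top _ _)] at h9
      have : t - ε ≤ a + G t := h9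
      rw [hb]
      linarith
  -- apply the key lemma
  have hkey := aux_key G hGmono hG0 hG1 b hb0 hup hlo
  have harith : b * (1 - min b 1) + (min b 1) ^ 2 / 2 ≤ ε + a - ε * a := by
    rcases le_total b 1 with hb1 | hb1
    · rw [min_eq_left hb1, hb]
      nlinarith [sq_nonneg ε, sq_nonneg a]
    · rw [min_eq_right hb1]
      rw [hb] at hb1
      nlinarith [sq_nonneg (ε - a), mul_nonneg (by linarith : (0:ℝ) ≤ 2 - ε - a)
        (by linarith : (0:ℝ) ≤ ε + a - 1)]
  have hθa : ε + a - ε * a < ε' := by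
    have hθeq : θ * (1 - ε) = ε' - ε := by
      rw [hθdef]
      exact div_mul_cancel₀ _ (by linarith : (1:ℝ) - ε ≠ 0)
    nlinarith [haθ, hε1]
  have hWlt : (∫ t in (0:ℝ)..1, |G t - t|) < ε' := lt_of_le_of_lt (hkey.trans harith) hθa
  exact absurd hx (not_le.2 hWlt)
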